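/- For all integers N>n≥1 and every f∈V_{h,n}, one has L_N R_{N−1}R_{N−2}⋯R_n f = R_{N−2}R_{N−3}⋯R_{n−1}(L_n f) + q^{−N}(1−q^{N−n})(A_h q^{N+n+h−1}−1)·R_{N−2}R_{N−3}⋯R_n f (products of consecutive raising operators, the empty product being the identity). For n=0 the same identity holds with the term containing L_n omitted. -/
import Mathlib


open Finset

noncomputable section

/-- q-shifted factorial `(a;q)_m`. -/
def qPoch (q a : ℝ) (m : ℕ) : ℝ := ∏ k ∈ Finset.range m, (1 - a * q ^ k)

/-- Partial sum `X_k = x_1 + ⋯ + x_k` (entries of index `< k`, 0-indexed). -/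
def Xlt {h : ℕ} (x : Fin h → ℕ) (k : ℕ) : ℕ := ∑ j : Fin h, if (j : ℕ) < k then x j else 0

/-- Partial product `A_k = α_1 ⋯ α_k` (entries of index `< k`, 0-indexed). -/
def Apar {h : ℕ} (α : Fin h → ℝ) (k : ℕ) : ℝ := ∏ j : Fin h, if (j : ℕ) < k then α j else 1

/-- Raising operator `R_N : V_{h,N} → V_{h,N+1}`. -/
def Rop (q : ℝ) {h : ℕ} (N : ℕ) (f : (Fin h → ℕ) → ℂ) : (Fin h → ℕ) → ℂ := fun x =>
  ∑ i : Fin h, (q : ℂ) ^ ((Xlt x i : ℤ) - N - 1) * (1 - (q : ℂ) ^ (x i)) *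
    f (Function.update x i (x i - 1))

/-- Lowering operator `L_N : V_{h,N} → V_{h,N-1}` (its defining formula does not involve `N`). -/
def Lop (q : ℝ) {h : ℕ} (α : Fin h → ℝ) (f : (Fin h → ℕ) → ℂ) : (Fin h → ℕ) → ℂ := fun x =>
  ∑ j : Fin h, ((Apar α j : ℝ) : ℂ) * (q : ℂ) ^ ((j : ℕ) + Xlt x j) *
    ((α j : ℂ) * (q : ℂ) ^ (x j + 1) - 1) * f (Function.update x j (x j + 1))

/-- The multidimensional q-Hahn operator `D_N : V_{h,N} → V_{h,N}`. -/
def Dop (q : ℝ) {h : ℕ} (α : Fin h → ℝ) (N : ℕ) (f : (Fin h → ℕ) → ℂ) : (Fin h → ℕ) → ℂ :=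
  fun x =>
    (∑ i : Fin h, ∑ j : Fin h,
      if i ≠ j then
        ((Apar α j : ℝ) : ℂ) *
          (q : ℂ) ^ ((((j : ℕ) + Xlt x j + Xlt x i : ℕ) : ℤ) - N -
            (if (i : ℕ) < (j : ℕ) then 1 else 0)) *
          ((α j : ℂ) * (q : ℂ) ^ (x j + 1) - 1) * (1 - (q : ℂ) ^ (x i)) *
          f (Function.update (Function.update x j (x j + 1)) i (x i - 1))
      else 0)
    + ((∑ j : Fin h,
          ((Apar α j : ℝ) : ℂ) * (q : ℂ) ^ ((((j : ℕ) + 2 * Xlt x j : ℕ) : ℤ) - N) *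
            ((α j : ℂ) * (q : ℂ) ^ (x j) - 1) * (1 - (q : ℂ) ^ (x j)))
        + (((Apar α h : ℝ) : ℂ) * (q : ℂ) ^ (((h + N : ℕ) : ℤ) - 1) - 1) *
            (1 - (q : ℂ) ^ (-(N : ℤ)))) * f x

/-- Scalar product on `V_{h,N}`. -/
def innerV (q : ℝ) {h : ℕ} (α : Fin h → ℝ) (N : ℕ) (f g : (Fin h → ℕ) → ℂ) : ℂ :=
  (q : ℂ) ^ (N * (N + 1) / 2) *
    ∑ x ∈ Finset.Nat.antidiagonalTuple h N,
      (∏ i : Fin h, ((qPoch q (q * α i) (x i) / qPoch q q (x i) : ℝ) : ℂ) *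
        ((α i * q : ℝ) : ℂ) ^ ((N : ℤ) - Xlt x ((i : ℕ) + 1))) *
      f x * (starRingEnd ℂ) (g x)

/-- `RopIter q n k f = R_{n+k-1} ⋯ R_{n+1} R_n f`. -/
def RopIter (q : ℝ) {h : ℕ} (n : ℕ) : ℕ → ((Fin h → ℕ) → ℂ) → ((Fin h → ℕ) → ℂ)
  | 0, f => f
  | k + 1, f => Rop q (n + k) (RopIter q n k f)

section XA
variable {h : ℕ}

lemma Xlt_zero (x : Fin h → ℕ) : Xlt x 0 = 0 := by unfold Xlt; simp

lemma Xlt_last (x : Fin h → ℕ) : Xlt x h = ∑ i, x i :=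
  Finset.sum_congr rfl (fun m _ => if_pos m.isLt)

lemma Xlt_succ (x : Fin h → ℕ) (j : Fin h) :
    Xlt x ((j : ℕ) + 1) = Xlt x (j : ℕ) + x j := by
  unfold Xlt
  have key : ∀ m : Fin h, (if (m:ℕ) < (j:ℕ)+1 then x m else 0)
      = (if (m:ℕ) < (j:ℕ) then x m else 0) + (if m = j then x j else 0) := by
    intro m
    rcases eq_or_ne m j with rfl | hm
    · simp
    · have h2 : (m:ℕ) ≠ (j:ℕ) := fun hc => hm (Fin.ext hc)
      rw [if_neg hm]
      split_ifs <;> omega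
  rw [Finset.sum_congr rfl (fun m _ => key m), Finset.sum_add_distrib,
    Finset.sum_ite_eq' Finset.univ j]
  simp

lemma Apar_zero (α : Fin h → ℝ) : Apar α 0 = 1 := by unfold Apar; simp

lemma Apar_succ (α : Fin h → ℝ) (j : Fin h) :
    Apar α ((j : ℕ) + 1) = Apar α (j : ℕ) * α j := by
  unfold Apar
  have key : ∀ m : Fin h, (if (m:ℕ) < (j:ℕ)+1 then α m else 1)
      = (if (m:ℕ) < (j:ℕ) then α m else 1) * (if m = j then α j else 1) := by
    intro m
    rcases eq_or_ne m j with rfl | hm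
    · simp
    · have h2 : (m:ℕ) ≠ (j:ℕ) := fun hc => hm (Fin.ext hc)
      rw [if_neg hm, mul_one]
      have : ((m:ℕ) < (j:ℕ)+1) ↔ ((m:ℕ) < (j:ℕ)) := by omega
      rw [if_congr this rfl rfl]
  rw [Finset.prod_congr rfl (fun m _ => key m), Finset.prod_mul_distrib,
    Finset.prod_ite_eq' Finset.univ j]
  simp

lemma Xlt_update_succ (x : Fin h → ℕ) (j : Fin h) (k : ℕ) :
    Xlt (Function.update x j (x j + 1)) k = Xlt x k + (if (j:ℕ) < k then 1 else 0) := by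
  unfold Xlt
  have key : ∀ m : Fin h, (if (m:ℕ) < k then Function.update x j (x j + 1) m else 0)
      = (if (m:ℕ) < k then x m else 0) + (if m = j then (if (j:ℕ) < k then 1 else 0) else 0) := by
    intro m
    rcases eq_or_ne m j with rfl | hm
    · simp only [Function.update_self]; split_ifs <;> omega
    · simp [Function.update_of_ne hm, hm]
  rw [Finset.sum_congr rfl (fun m _ => key m), Finset.sum_add_distrib,
    Finset.sum_ite_eq' Finset.univ j]
  simp

lemma update_pred_succ (x : Fin h → ℕ) (i : Fin h) (hi : 1 ≤ x i) :
    Function.update (Function.update x i (x i - 1)) i ((x i - 1) + 1) = x := by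
  funext m
  rcases eq_or_ne m i with rfl | hm
  · simp only [Function.update_self]; omega
  · simp [Function.update_of_ne hm]

lemma Xlt_update_pred (x : Fin h → ℕ) (i : Fin h) (hi : 1 ≤ x i) (k : ℕ) :
    Xlt (Function.update x i (x i - 1)) k + (if (i:ℕ) < k then 1 else 0) = Xlt x k := by
  have h1 := Xlt_update_succ (Function.update x i (x i - 1)) i k
  rw [Function.update_self] at h1
  rw [update_pred_succ x i hi] at h1
  omega

lemma Xlt_update_of_le (x : Fin h → ℕ) (i : Fin h) (v : ℕ) (k : ℕ) (hk : k ≤ (i:ℕ)) :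
    Xlt (Function.update x i v) k = Xlt x k := by
  unfold Xlt
  refine Finset.sum_congr rfl fun m _ => ?_
  rcases eq_or_ne m i with rfl | hm
  · rw [if_neg (by omega), if_neg (by omega)]
  · rw [Function.update_of_ne hm]

lemma sum_update_add (x : Fin h → ℕ) (i : Fin h) (v : ℕ) :
    (∑ m, Function.update x i v m) + x i = (∑ m, x m) + v := by
  rw [Finset.sum_update_of_mem (Finset.mem_univ i), Finset.sdiff_singleton_eq_erase,
    ← Finset.add_sum_erase _ x (Finset.mem_univ i)]
  ring

end XA


section Rops
variable {h : ℕ} (q : ℝ)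

lemma Rop_smul (N : ℕ) (c : ℂ) (g : (Fin h → ℕ) → ℂ) (x : Fin h → ℕ) :
    Rop q N (fun y => c * g y) x = c * Rop q N g x := by
  unfold Rop; rw [Finset.mul_sum]; exact Finset.sum_congr rfl (fun i _ => by ring)

lemma Rop_add (N : ℕ) (g₁ g₂ : (Fin h → ℕ) → ℂ) (x : Fin h → ℕ) :
    Rop q N (fun y => g₁ y + g₂ y) x = Rop q N g₁ x + Rop q N g₂ x := by
  unfold Rop; rw [← Finset.sum_add_distrib]; exact Finset.sum_congr rfl (fun i _ => by ring)

lemma Rop_shift (hq : (q:ℂ) ≠ 0) (N : ℕ) (g : (Fin h → ℕ) → ℂ) (x : Fin h → ℕ) :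
    Rop q N g x = (q:ℂ) * Rop q (N+1) g x := by
  unfold Rop; rw [Finset.mul_sum]
  refine Finset.sum_congr rfl (fun i _ => ?_)
  have he : ((Xlt x i : ℤ) - N - 1) = ((Xlt x i : ℤ) - (N+1:ℕ) - 1) + 1 := by push_cast; ring
  rw [he, zpow_add_one₀ hq]
  ring

lemma Rop_congr (N : ℕ) (g₁ g₂ : (Fin h → ℕ) → ℂ) (x : Fin h → ℕ)
    (hg : ∀ y : Fin h → ℕ, (∑ m, y m) + 1 = ∑ m, x m → g₁ y = g₂ y) :
    Rop q N g₁ x = Rop q N g₂ x := by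
  unfold Rop
  refine Finset.sum_congr rfl (fun i _ => ?_)
  rcases Nat.eq_zero_or_pos (x i) with h0 | h1
  · simp [h0]
  · have hsum : (∑ m, Function.update x i (x i - 1) m) + 1 = ∑ m, x m := by
      have := sum_update_add x i (x i - 1); omega
    rw [hg _ hsum]

lemma RopIter_succ (n k : ℕ) (g : (Fin h → ℕ) → ℂ) :
    RopIter q n (k+1) g = Rop q (n+k) (RopIter q n k g) := rfl

lemma RopIter_shift (hq : (q:ℂ) ≠ 0) (n k : ℕ) (g : (Fin h → ℕ) → ℂ) :
    RopIter q n k g = fun x => (q:ℂ)^k * RopIter q (n+1) k g x := by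
  induction k with
  | zero => funext x; simp [RopIter]
  | succ k ih =>
    funext x
    rw [RopIter_succ, ih, Rop_smul, Rop_shift q hq, RopIter_succ]
    have he : n + k + 1 = n + 1 + k := by omega
    rw [he]
    ring

lemma RopIter_vanish (n k : ℕ) (g : (Fin h → ℕ) → ℂ) (x : Fin h → ℕ)
    (hx : (∑ m, x m) < k) : RopIter q n k g x = 0 := by
  induction k generalizing x with
  | zero => omega
  | succ k ih =>
    rw [RopIter_succ]
    unfold Rop
    refine Finset.sum_eq_zero (fun i _ => ?_)
    rcases Nat.eq_zero_or_pos (x i) with h0 | h1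
    · simp [h0]
    · have hz : RopIter q n k g (Function.update x i (x i - 1)) = 0 :=
        ih _ (by have := sum_update_add x i (x i - 1); omega)
      rw [hz, mul_zero]


lemma RopIter_shift' (hq : (q:ℂ) ≠ 0) (n k : ℕ) (g : (Fin h → ℕ) → ℂ) (x : Fin h → ℕ) :
    RopIter q n k g x = (q:ℂ)^k * RopIter q (n+1) k g x := by
  rw [RopIter_shift q hq n k g]

end Rops


section Step
variable {h : ℕ} (q : ℝ) (α : Fin h → ℝ) (n : ℕ) (f : (Fin h → ℕ) → ℂ) (x : Fin h → ℕ)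

/-- term of `Lop (Rop f)`: outer index j, inner index i -/
def Fterm (j i : Fin h) : ℂ :=
  ((Apar α (j:ℕ) : ℝ) : ℂ) * (q:ℂ) ^ ((j : ℕ) + Xlt x (j:ℕ)) *
    ((α j : ℂ) * (q:ℂ) ^ (x j + 1) - 1) *
    ((q:ℂ) ^ ((Xlt (Function.update x j (x j + 1)) (i:ℕ) : ℤ) - n - 1) *
      (1 - (q:ℂ) ^ (Function.update x j (x j + 1) i)) *
      f (Function.update (Function.update x j (x j + 1)) i
          (Function.update x j (x j + 1) i - 1)))

/-- term of `Rop (Lop f)`: outer index i, inner index j -/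
def Gterm (i j : Fin h) : ℂ :=
  (q:ℂ) ^ ((Xlt x (i:ℕ) : ℤ) - n - 1) * (1 - (q:ℂ) ^ (x i)) *
    (((Apar α (j:ℕ) : ℝ) : ℂ) * (q:ℂ) ^ ((j : ℕ) + Xlt (Function.update x i (x i - 1)) (j:ℕ)) *
      ((α j : ℂ) * (q:ℂ) ^ (Function.update x i (x i - 1) j + 1) - 1) *
      f (Function.update (Function.update x i (x i - 1)) j
          (Function.update x i (x i - 1) j + 1)))

def Ttel (k : ℕ) : ℂ := ((Apar α k : ℝ) : ℂ) * (q:ℂ) ^ (k + 2 * Xlt x k)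

lemma hL_expand : Lop q α (Rop q n f) x = ∑ j : Fin h, ∑ i : Fin h, Fterm q α n f x j i := by
  unfold Lop Rop Fterm
  exact Finset.sum_congr rfl (fun j _ => by rw [Finset.mul_sum])

lemma hR_expand : Rop q n (Lop q α f) x = ∑ i : Fin h, ∑ j : Fin h, Gterm q α n f x i j := by
  unfold Lop Rop Gterm
  exact Finset.sum_congr rfl (fun i _ => by rw [Finset.mul_sum])

lemma hw_pow (hq : (q:ℂ) ≠ 0) (m : ℕ) : (q:ℂ) ^ ((m:ℤ) - n - 1) = (q:ℂ) ^ m * (q:ℂ) ^ (-(n:ℤ) - 1) := by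
  rw [← zpow_natCast (q:ℂ) m, ← zpow_add₀ hq]
  congr 1; ring

lemma off_eq (hq : (q:ℂ) ≠ 0) (i j : Fin h) (hij : i ≠ j) :
    Fterm q α n f x j i = (q:ℂ) * Gterm q α n f x i j := by
  unfold Fterm Gterm
  rw [Function.update_of_ne hij, Function.update_of_ne hij.symm,
    Function.update_comm hij.symm]
  rcases Nat.eq_zero_or_pos (x i) with h0 | h1
  · simp [h0]
  · rw [Xlt_update_succ x j (i:ℕ)]
    have hXz := Xlt_update_pred x i h1 (j:ℕ)
    have hne : (i:ℕ) ≠ (j:ℕ) := fun hc => hij (Fin.ext hc)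
    rcases lt_or_gt_of_ne hne with hlt | hgt
    · rw [if_pos hlt] at hXz
      rw [if_neg (show ¬((j:ℕ) < (i:ℕ)) from by omega), Nat.add_zero, ← hXz,
        hw_pow q n hq]
      rw [hw_pow q n hq (Xlt x (i:ℕ))]
      ring
    · rw [if_neg (show ¬((i:ℕ) < (j:ℕ)) from by omega), Nat.add_zero] at hXz
      rw [if_pos hgt, hXz, hw_pow q n hq (Xlt x (i:ℕ) + 1), hw_pow q n hq (Xlt x (i:ℕ))]
      ring

lemma diagF (hq : (q:ℂ) ≠ 0) (j : Fin h) :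
    Fterm q α n f x j j
      = ((Apar α (j:ℕ) : ℝ) : ℂ) * (q:ℂ) ^ ((j:ℕ) + 2 * Xlt x (j:ℕ)) * (q:ℂ) ^ (-(n:ℤ) - 1) *
          (((α j : ℂ) * (q:ℂ) ^ (x j + 1) - 1) * (1 - (q:ℂ) ^ (x j + 1))) * f x := by
  unfold Fterm
  rw [Function.update_self, Xlt_update_succ, if_neg (lt_irrefl _), Nat.add_zero,
    Function.update_idem, Nat.add_sub_cancel, Function.update_eq_self, hw_pow q n hq]
  ring

lemma diagG (hq : (q:ℂ) ≠ 0) (i : Fin h) :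
    (q:ℂ) * Gterm q α n f x i i
      = ((Apar α (i:ℕ) : ℝ) : ℂ) * (q:ℂ) ^ ((i:ℕ) + 2 * Xlt x (i:ℕ)) * (q:ℂ) ^ (-(n:ℤ) - 1) *
          ((q:ℂ) * ((α i : ℂ) * (q:ℂ) ^ (x i) - 1) * (1 - (q:ℂ) ^ (x i))) * f x := by
  unfold Gterm
  rcases Nat.eq_zero_or_pos (x i) with h0 | h1
  · simp [h0]
  · rw [Function.update_self, Xlt_update_of_le x i _ _ (le_refl _),
      update_pred_succ x i h1, Nat.sub_add_cancel h1, hw_pow q n hq]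
    ring

lemma key_diag (hq : (q:ℂ) ≠ 0) (j : Fin h) :
    Fterm q α n f x j j - (q:ℂ) * Gterm q α n f x j j
      = (q:ℂ) ^ (-(n:ℤ) - 1) * (1 - (q:ℂ)) * f x *
          (Ttel q α x ((j:ℕ) + 1) - Ttel q α x (j:ℕ)) := by
  rw [diagF q α n f x hq j, diagG q α n f x hq j]
  unfold Ttel
  rw [Apar_succ, Xlt_succ]
  push_cast
  ring

lemma htel (hx : ∑ m, x m = n) :
    ∑ j : Fin h, (Ttel q α x ((j:ℕ) + 1) - Ttel q α x (j:ℕ))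
      = ((Apar α h : ℝ) : ℂ) * (q:ℂ) ^ (h + 2 * n) - 1 := by
  rw [Fin.sum_univ_eq_sum_range (fun k => Ttel q α x (k+1) - Ttel q α x k) h,
    Finset.sum_range_sub (Ttel q α x)]
  unfold Ttel
  rw [Xlt_last, hx, Apar_zero, Xlt_zero]
  simp

lemma step (hq : (q:ℂ) ≠ 0) (hx : ∑ m, x m = n) :
    Lop q α (Rop q n f) x
      = (q:ℂ) * Rop q n (Lop q α f) x
        + (q:ℂ) ^ (-(n:ℤ) - 1) * (1 - (q:ℂ)) *
          (((Apar α h : ℝ) : ℂ) * (q:ℂ) ^ (2*n + h) - 1) * f x := by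
  rw [hL_expand, hR_expand]
  have splitF : ∑ j : Fin h, ∑ i : Fin h, Fterm q α n f x j i
      = (∑ j : Fin h, ∑ i ∈ univ \ {j}, Fterm q α n f x j i)
        + ∑ j : Fin h, Fterm q α n f x j j := by
    rw [← Finset.sum_add_distrib]
    exact Finset.sum_congr rfl fun j _ =>
      Finset.sum_eq_sum_sdiff_singleton_add (Finset.mem_univ j) _
  have splitG : (q:ℂ) * ∑ i : Fin h, ∑ j : Fin h, Gterm q α n f x i j
      = (∑ i : Fin h, ∑ j ∈ univ \ {i}, (q:ℂ) * Gterm q α n f x i j)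
        + ∑ i : Fin h, (q:ℂ) * Gterm q α n f x i i := by
    rw [Finset.mul_sum, ← Finset.sum_add_distrib]
    refine Finset.sum_congr rfl fun i _ => ?_
    rw [Finset.mul_sum, Finset.sum_eq_sum_sdiff_singleton_add (Finset.mem_univ i)
      (fun j => (q:ℂ) * Gterm q α n f x i j)]
  have hoff : ∑ j : Fin h, ∑ i ∈ univ \ {j}, Fterm q α n f x j i
      = ∑ i : Fin h, ∑ j ∈ univ \ {i}, (q:ℂ) * Gterm q α n f x i j := by
    have h1 : ∑ j : Fin h, ∑ i ∈ univ \ {j}, Fterm q α n f x j i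
        = ∑ j : Fin h, ∑ i ∈ univ \ {j}, (q:ℂ) * Gterm q α n f x i j :=
      Finset.sum_congr rfl fun j _ => Finset.sum_congr rfl fun i hi =>
        off_eq q α n f x hq i j (by simpa using (Finset.mem_sdiff.mp hi).2)
    rw [h1]
    refine Finset.sum_comm' ?_
    intro a b
    simp only [Finset.mem_univ, true_and, and_true, Finset.mem_sdiff, Finset.mem_singleton]
    exact ne_comm
  have hdiag : ∑ j : Fin h, Fterm q α n f x j j
      = (∑ j : Fin h, (q:ℂ) * Gterm q α n f x j j)
        + (q:ℂ) ^ (-(n:ℤ) - 1) * (1 - (q:ℂ)) *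
            (((Apar α h : ℝ) : ℂ) * (q:ℂ) ^ (2*n + h) - 1) * f x := by
    have h2 : ∑ j : Fin h, Fterm q α n f x j j
        = ∑ j : Fin h, ((q:ℂ) * Gterm q α n f x j j
            + (q:ℂ) ^ (-(n:ℤ) - 1) * (1 - (q:ℂ)) * f x *
              (Ttel q α x ((j:ℕ) + 1) - Ttel q α x (j:ℕ))) :=
      Finset.sum_congr rfl fun j _ => by linear_combination key_diag q α n f x hq j
    rw [h2, Finset.sum_add_distrib]
    congr 1
    rw [← Finset.mul_sum, htel q α n x hx]
    ring
  rw [splitF, splitG, hoff, hdiag]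
  ring


section Main
variable {h : ℕ} (q : ℝ)

lemma scal (hq : (q:ℂ) ≠ 0) (A : ℂ) (n e : ℕ) :
    (q:ℂ)^(-(n:ℤ)-(e:ℤ)-1) * (1-(q:ℂ)^(e+1)) * (A*(q:ℂ)^(2*n+e+h)-1)
      + (q:ℂ)^(-((n+e+1:ℕ):ℤ)-1) * (1-(q:ℂ)) * (A*(q:ℂ)^(2*(n+e+1)+h)-1)
      = (q:ℂ)^(-(n:ℤ)-((e+1:ℕ):ℤ)-1) * (1-(q:ℂ)^(e+1+1)) * (A*(q:ℂ)^(2*n+(e+1)+h)-1) := by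
  have k1 : (-(n:ℤ)-(e:ℤ)-1) = -((n+e+1:ℕ):ℤ) := by push_cast; ring
  have k2 : (-((n+e+1:ℕ):ℤ)-1) = -((n+e+2:ℕ):ℤ) := by push_cast; ring
  have k3 : (-(n:ℤ)-((e+1:ℕ):ℤ)-1) = -((n+e+2:ℕ):ℤ) := by push_cast; ring
  rw [k1, k2, k3, zpow_neg, zpow_neg, zpow_natCast, zpow_natCast]
  have hp1 : (q:ℂ)^(n+e+1) ≠ 0 := pow_ne_zero _ hq
  have hp2 : (q:ℂ)^(n+e+2) ≠ 0 := pow_ne_zero _ hq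
  field_simp
  ring

lemma main (hq : (q:ℂ) ≠ 0) (α : Fin h → ℝ) (e : ℕ) :
    ∀ (n : ℕ) (f : (Fin h → ℕ) → ℂ) (x : Fin h → ℕ), (∑ m, x m) = n + e →
    Lop q α (RopIter q n (e+1) f) x
      = (q:ℂ)^(e+1) * RopIter q n (e+1) (Lop q α f) x
        + (q:ℂ)^(-(n:ℤ)-(e:ℤ)-1) * (1 - (q:ℂ)^(e+1)) *
          (((Apar α h:ℝ):ℂ) * (q:ℂ)^(2*n+e+h) - 1) * RopIter q n e f x := by
  induction e with
  | zero =>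
    intro n f x hx
    have h0 : RopIter q n (0+1) f = Rop q n f := by
      show Rop q (n+0) f = Rop q n f
      rw [Nat.add_zero]
    have h0' : RopIter q n (0+1) (Lop q α f) = Rop q n (Lop q α f) := by
      show Rop q (n+0) (Lop q α f) = Rop q n (Lop q α f)
      rw [Nat.add_zero]
    rw [h0, h0', step q α n f x hq (by omega),
      show RopIter q n 0 f = f from rfl]
    push_cast
    ring
  | succ e IH =>
    intro n f x hx
    have hs : (∑ m, x m) = n + e + 1 := by omega
    have h2 : Rop q (n+e+1) (Lop q α (RopIter q n (e+1) f)) x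
        = (q:ℂ)^(e+1) * Rop q (n+e+1) (RopIter q n (e+1) (Lop q α f)) x
          + (q:ℂ)^(-(n:ℤ)-(e:ℤ)-1) * (1 - (q:ℂ)^(e+1)) *
            (((Apar α h:ℝ):ℂ) * (q:ℂ)^(2*n+e+h) - 1) * Rop q (n+e+1) (RopIter q n e f) x := by
      have c1 : Rop q (n+e+1) (Lop q α (RopIter q n (e+1) f)) x
          = Rop q (n+e+1) (fun y => (q:ℂ)^(e+1) * RopIter q n (e+1) (Lop q α f) y
              + ((q:ℂ)^(-(n:ℤ)-(e:ℤ)-1) * (1 - (q:ℂ)^(e+1)) *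
                (((Apar α h:ℝ):ℂ) * (q:ℂ)^(2*n+e+h) - 1)) * RopIter q n e f y) x :=
        Rop_congr q _ _ _ x (fun y hy => IH n f y (by omega))
      have c2 := Rop_add q (n+e+1)
        (fun y => (q:ℂ)^(e+1) * RopIter q n (e+1) (Lop q α f) y)
        (fun y => ((q:ℂ)^(-(n:ℤ)-(e:ℤ)-1) * (1 - (q:ℂ)^(e+1)) *
          (((Apar α h:ℝ):ℂ) * (q:ℂ)^(2*n+e+h) - 1)) * RopIter q n e f y) x
      have c3 := Rop_smul q (n+e+1) ((q:ℂ)^(e+1)) (RopIter q n (e+1) (Lop q α f)) x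
      have c4 := Rop_smul q (n+e+1)
        ((q:ℂ)^(-(n:ℤ)-(e:ℤ)-1) * (1 - (q:ℂ)^(e+1)) *
          (((Apar α h:ℝ):ℂ) * (q:ℂ)^(2*n+e+h) - 1)) (RopIter q n e f) x
      rw [c1, c2, c3, c4]
    have h4 : (q:ℂ) * Rop q (n+e+1) (RopIter q n e f) x = RopIter q n (e+1) f x := by
      rw [← Rop_shift q hq (n+e) (RopIter q n e f) x]
      rfl
    have hscal := scal (h := h) q hq (((Apar α h:ℝ):ℂ)) n e
    calc Lop q α (RopIter q n (e+1+1) f) x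
        = Lop q α (Rop q (n+e+1) (RopIter q n (e+1) f)) x := rfl
      _ = (q:ℂ) * Rop q (n+e+1) (Lop q α (RopIter q n (e+1) f)) x
            + (q:ℂ)^(-((n+e+1:ℕ):ℤ)-1) * (1-(q:ℂ)) *
              (((Apar α h:ℝ):ℂ) * (q:ℂ)^(2*(n+e+1)+h) - 1) * RopIter q n (e+1) f x :=
          step q α (n+e+1) (RopIter q n (e+1) f) x hq hs
      _ = (q:ℂ)^(e+1+1) * RopIter q n (e+1+1) (Lop q α f) x
            + (q:ℂ)^(-(n:ℤ)-((e+1:ℕ):ℤ)-1) * (1 - (q:ℂ)^(e+1+1)) *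
              (((Apar α h:ℝ):ℂ) * (q:ℂ)^(2*n+(e+1)+h) - 1) * RopIter q n (e+1) f x := by
          rw [h2, show Rop q (n+e+1) (RopIter q n (e+1) (Lop q α f)) x
              = RopIter q n (e+1+1) (Lop q α f) x from rfl]
          linear_combination ((q:ℂ)^(-(n:ℤ)-(e:ℤ)-1) * (1 - (q:ℂ)^(e+1)) *
              (((Apar α h:ℝ):ℂ) * (q:ℂ)^(2*n+e+h) - 1)) * h4
            + (RopIter q n (e+1) f x) * hscal

end Main


theorem stmt3 (q : ℝ) (hq0 : 0 < q) (hq1 : q < 1) (h : ℕ) (hh : 1 ≤ h)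
    (α : Fin h → ℝ) (hα : ∀ i, 0 < α i) (n N : ℕ) (hnN : n < N)
    (f : (Fin h → ℕ) → ℂ) :
    (1 ≤ n → ∀ x : Fin h → ℕ, (∑ i, x i) = N - 1 →
      Lop q α (RopIter q n (N - n) f) x =
        RopIter q (n - 1) (N - n) (Lop q α f) x +
          (q : ℂ) ^ (-(N : ℤ)) * (1 - (q : ℂ) ^ (N - n)) *
            (((Apar α h : ℝ) : ℂ) * (q : ℂ) ^ (((N + n + h : ℕ) : ℤ) - 1) - 1) *
            RopIter q n (N - 1 - n) f x) ∧
    (n = 0 → ∀ x : Fin h → ℕ, (∑ i, x i) = N - 1 →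
      Lop q α (RopIter q 0 N f) x =
        (q : ℂ) ^ (-(N : ℤ)) * (1 - (q : ℂ) ^ N) *
          (((Apar α h : ℝ) : ℂ) * (q : ℂ) ^ (((N + h : ℕ) : ℤ) - 1) - 1) *
          RopIter q 0 (N - 1) f x) := by
  have hq : (q:ℂ) ≠ 0 := by
    simp only [ne_eq, Complex.ofReal_eq_zero]
    exact ne_of_gt hq0
  constructor
  · intro hn x hx
    obtain ⟨n', rfl⟩ : ∃ n', n = n' + 1 := ⟨n - 1, by omega⟩
    obtain ⟨e, rfl⟩ : ∃ e, N = n' + 1 + e + 1 := ⟨N - n' - 2, by omega⟩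
    have d1 : n' + 1 + e + 1 - (n' + 1) = e + 1 := by omega
    have d2 : n' + 1 + e + 1 - 1 - (n' + 1) = e := by omega
    have d3 : n' + 1 - 1 = n' := by omega
    rw [d1, d2, d3]
    have hx' : (∑ m, x m) = (n'+1) + e := by omega
    rw [main q hq α e (n'+1) f x hx', RopIter_shift' q hq n' (e+1) (Lop q α f) x]
    have k1 : (-((n' + 1 + e + 1 : ℕ):ℤ)) = (-((n'+1:ℕ):ℤ)-(e:ℤ)-1) := by push_cast; ring
    have k2 : (((n' + 1 + e + 1 + (n' + 1) + h : ℕ):ℤ) - 1) = ((2*(n'+1)+e+h : ℕ):ℤ) := by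
      push_cast; ring
    rw [k1, k2, zpow_natCast]
  · intro hn x hx
    subst hn
    obtain ⟨e, rfl⟩ : ∃ e, N = e + 1 := ⟨N - 1, by omega⟩
    have d1 : e + 1 - 1 = e := by omega
    rw [d1]
    have hx' : (∑ m, x m) = 0 + e := by omega
    rw [main q hq α e 0 f x hx',
      RopIter_vanish q 0 (e+1) (Lop q α f) x (by omega), mul_zero, zero_add]
    have k1 : (-((e + 1 : ℕ):ℤ)) = (-((0:ℕ):ℤ)-(e:ℤ)-1) := by push_cast; ring
    have k2 : (((e + 1 + h : ℕ):ℤ) - 1) = ((2*0+e+h : ℕ):ℤ) := by push_cast; ring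
    rw [k1, k2, zpow_natCast]
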